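/- arXiv:2212.09696 — 4 statements merged into one kernel-verified Lean document; each statement's English description precedes it below -/
import Mathlib

section
/- The left boundary operator b_l satisfies the blob-algebra relations: b_l² = b_l; e_1 b_l e_1 = y_l · e_1 with blob weight y_l = sinh(h(α_l+1))/sinh(hα_l); and b_l e_i = e_i b_l for all 2 ≤ i ≤ N−1. -/
/-!
The operator `b_l` acts on the first site only, as `B = (1 + K/s)/2` with `s = sinh(hα_l)` and
`K² = s²`; hence `B² = B`, and `b_l` commutes with everything supported on the other sites.
On sites 1, 2 the generator `e_1` is a rank-one matrix `u vᵀ`, so `e_1 X e_1 = (vᵀ X u) e_1`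
for every `X`, and for `X = B ⊗ 1` this scalar is
`e^h B₁₁ + e^{-h} B₂₂ = cosh h + sinh h coth(hα_l) = sinh(h(α_l+1))/sinh(hα_l)`.
-/

noncomputable section

/-- Basis labels of `(ℂ²)^{⊗N}`: a state (0 = ↑, 1 = ↓) for each of the `N` sites. -/
abbrev Conf (N : ℕ) := Fin N → Fin 2

def pauliX : Matrix (Fin 2) (Fin 2) ℂ := !![0, 1; 1, 0]
def pauliY : Matrix (Fin 2) (Fin 2) ℂ := !![0, -Complex.I; Complex.I, 0]
def pauliZ : Matrix (Fin 2) (Fin 2) ℂ := !![1, 0; 0, -1]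
/-- `σ⁺ = (σˣ + iσʸ)/2`. -/
def pauliP : Matrix (Fin 2) (Fin 2) ℂ := !![0, 1; 0, 0]
/-- `σ⁻ = (σˣ − iσʸ)/2`. -/
def pauliM : Matrix (Fin 2) (Fin 2) ℂ := !![0, 0; 1, 0]

open Fin.NatCast in
/-- `X_j`: the operator on `(ℂ²)^{⊗N}` acting as the 2×2 matrix `X` on the `j`-th tensor
factor (sites labelled `1,…,N`) and as the identity on the others. -/
def siteOp (N : ℕ) [NeZero N] (X : Matrix (Fin 2) (Fin 2) ℂ) (j : ℕ) :
    Matrix (Conf N) (Conf N) ℂ :=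
  Matrix.of fun f g =>
    X (f ((j - 1 : ℕ) : Fin N)) (g ((j - 1 : ℕ) : Fin N)) *
      ∏ k ∈ Finset.univ.erase ((j - 1 : ℕ) : Fin N), if f k = g k then (1 : ℂ) else 0

/-- The Temperley–Lieb generator
`e_i = −(1/2)(σˣᵢσˣᵢ₊₁ + σʸᵢσʸᵢ₊₁ + cosh(h)(σᶻᵢσᶻᵢ₊₁ − 1) + sinh(h)(σᶻᵢ₊₁ − σᶻᵢ))`. -/
def eOp (N : ℕ) [NeZero N] (h : ℂ) (i : ℕ) : Matrix (Conf N) (Conf N) ℂ :=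
  (-(1 / 2 : ℂ)) •
    (siteOp N pauliX i * siteOp N pauliX (i + 1)
      + siteOp N pauliY i * siteOp N pauliY (i + 1)
      + Complex.cosh h • (siteOp N pauliZ i * siteOp N pauliZ (i + 1) - 1)
      + Complex.sinh h • (siteOp N pauliZ (i + 1) - siteOp N pauliZ i))

/-- The left boundary operator
`b_l = (1/(2 sinh(hα_l)))(i e^{hθ_l} σ⁺₁ + i e^{−hθ_l} σ⁻₁ + cosh(hα_l) σᶻ₁) + (1/2)·Id`. -/
def blobL (N : ℕ) [NeZero N] (h αl θl : ℂ) : Matrix (Conf N) (Conf N) ℂ :=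
  (1 / (2 * Complex.sinh (h * αl))) •
    ((Complex.I * Complex.exp (h * θl)) • siteOp N pauliP 1
      + (Complex.I * Complex.exp (-(h * θl))) • siteOp N pauliM 1
      + Complex.cosh (h * αl) • siteOp N pauliZ 1)
  + (1 / 2 : ℂ) • 1

/-- The right boundary operator
`b_r = −(1/(2 sinh(hα_r)))(i e^{hθ_r} σ⁺_N + i e^{−hθ_r} σ⁻_N + cosh(hα_r) σᶻ_N) + (1/2)·Id`. -/
def blobR (N : ℕ) [NeZero N] (h αr θr : ℂ) : Matrix (Conf N) (Conf N) ℂ :=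
  (-(1 / (2 * Complex.sinh (h * αr)))) •
    ((Complex.I * Complex.exp (h * θr)) • siteOp N pauliP N
      + (Complex.I * Complex.exp (-(h * θr))) • siteOp N pauliM N
      + Complex.cosh (h * αr) • siteOp N pauliZ N)
  + (1 / 2 : ℂ) • 1

open Matrix Kronecker

namespace Matrix

section

variable {m n R : Type*} [Fintype m] [DecidableEq m] [Fintype n] [DecidableEq n] [CommSemiring R]

def kroneckerOneAlgHom : Matrix m m R →ₐ[R] Matrix (m × n) (m × n) R :=
  { toFun A := A ⊗ₖ 1
    map_one' := one_kronecker_one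
    map_mul' A B := by rw [← mul_kronecker_mul, mul_one]
    map_zero' := zero_kronecker 1
    map_add' A B := add_kronecker A B 1
    commutes' r := by simp [algebraMap_eq_diagonal, ← diagonal_one, diagonal_kronecker_diagonal] }

@[simp]
theorem kroneckerOneAlgHom_apply (A : Matrix m m R) :
    (kroneckerOneAlgHom A : Matrix (m × n) (m × n) R) = A ⊗ₖ 1 :=
  rfl

end

theorem vecMulVec_mul_mul_vecMulVec {l m k n R : Type*} [Fintype m] [Fintype k]
    [CommSemiring R] (u : l → R) (v : m → R) (X : Matrix m k R) (w : k → R) (z : n → R) :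
    vecMulVec u v * X * vecMulVec w z = ((v ᵥ* X) ⬝ᵥ w) • vecMulVec u z := by
  rw [vecMulVec_mul, vecMulVec_mul_vecMulVec, vecMulVec_smul]

end Matrix

def Equiv.funSplitAtPair {ι : Type*} [DecidableEq ι] {p q : ι} (hpq : p ≠ q) (σ : Type*) :
    (ι → σ) ≃ (σ × σ) × ({k // k ≠ p ∧ k ≠ q} → σ) where
  toFun f := ((f p, f q), fun k => f k)
  invFun x k := if hp : k = p then x.1.1 else if hq : k = q then x.1.2 else x.2 ⟨k, hp, hq⟩
  left_inv f := by funext k; grind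
  right_inv := fun ⟨⟨a, b⟩, r⟩ => by
    ext k
    · simp
    · simp [hpq.symm]
    · simp [k.2.1, k.2.2]

theorem isIdempotentElem_smul_add_half {𝕜 A : Type*} [Field 𝕜] [CharZero 𝕜] [Ring A]
    [Algebra 𝕜 A] {s : 𝕜} (hs : s ≠ 0) {K : A} (hK : K * K = s ^ 2 • 1) :
    IsIdempotentElem ((1 / (2 * s)) • K + (1 / 2 : 𝕜) • 1) := by
  have hcoeff : 1 / (2 * s) * (1 / (2 * s)) * s ^ 2 = 1 / 4 := by field_simp; ring
  simp only [IsIdempotentElem, add_mul, mul_add, smul_mul_smul, hK, mul_one, one_mul, smul_smul,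
    hcoeff]
  module

section LocalOperators

variable {ι σ R : Type*} [Fintype ι] [DecidableEq ι] [Fintype σ] [DecidableEq σ] [CommRing R]

def onSite (p : ι) : Matrix σ σ R →ₐ[R] Matrix (ι → σ) (ι → σ) R :=
  (reindexAlgEquiv R R (Equiv.funSplitAt p σ).symm).toAlgHom.comp kroneckerOneAlgHom

def onPair {p q : ι} (hpq : p ≠ q) : Matrix (σ × σ) (σ × σ) R →ₐ[R] Matrix (ι → σ) (ι → σ) R :=
  (reindexAlgEquiv R R (Equiv.funSplitAtPair hpq σ).symm).toAlgHom.comp kroneckerOneAlgHom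

theorem onSite_apply (p : ι) (X : Matrix σ σ R) (f g : ι → σ) :
    onSite p X f g = X (f p) (g p) * if ∀ k ≠ p, f k = g k then 1 else 0 := by
  simp [onSite, one_apply, funext_iff]

theorem onPair_apply {p q : ι} (hpq : p ≠ q) (M : Matrix (σ × σ) (σ × σ) R) (f g : ι → σ) :
    onPair hpq M f g =
      M (f p, f q) (g p, g q) * if ∀ k, k ≠ p → k ≠ q → f k = g k then 1 else 0 := by
  simp [onPair, Equiv.funSplitAtPair, one_apply, funext_iff]

theorem onSite_eq_onPair_fst {p q : ι} (hpq : p ≠ q) (X : Matrix σ σ R) :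
    onSite p X = onPair hpq (X ⊗ₖ 1) := by
  ext f g
  rw [onSite_apply, onPair_apply, kronecker_apply, one_apply]
  by_cases hq : f q = g q <;> grind

theorem onSite_eq_onPair_snd {p q : ι} (hpq : p ≠ q) (Y : Matrix σ σ R) :
    onSite q Y = onPair hpq (1 ⊗ₖ Y) := by
  ext f g
  rw [onSite_apply, onPair_apply, kronecker_apply, one_apply]
  by_cases hp : f p = g p <;> grind

theorem onPair_kronecker {p q : ι} (hpq : p ≠ q) (X Y : Matrix σ σ R) :
    onPair hpq (X ⊗ₖ Y) = onSite p X * onSite q Y := by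
  rw [onSite_eq_onPair_fst hpq, onSite_eq_onPair_snd hpq, ← map_mul, ← mul_kronecker_mul,
    mul_one, one_mul]

theorem commute_onSite {p q : ι} (hpq : p ≠ q) (X Y : Matrix σ σ R) :
    Commute (onSite p X) (onSite q Y) := by
  rw [commute_iff_eq, ← onPair_kronecker hpq, onSite_eq_onPair_fst hpq, onSite_eq_onPair_snd hpq,
    ← map_mul, ← mul_kronecker_mul, one_mul, mul_one]

theorem commute_onSite_onPair {r p q : ι} (hrp : r ≠ p) (hrq : r ≠ q) (hpq : p ≠ q)
    (X : Matrix σ σ R) (M : Matrix (σ × σ) (σ × σ) R) :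
    Commute (onSite r X) (onPair hpq M) := by
  rw [matrix_eq_sum_single M]
  simp only [map_sum]
  refine Commute.sum_right _ _ _ fun x _ => Commute.sum_right _ _ _ fun y _ => ?_
  rw [← mul_one (M x y), ← single_kronecker_single, onPair_kronecker]
  exact (commute_onSite hrp X _).mul_right (commute_onSite hrq X _)

end LocalOperators

open Complex Fin.NatCast

theorem siteOp_eq_onSite (N : ℕ) [NeZero N] (X : Matrix (Fin 2) (Fin 2) ℂ) (j : ℕ) :
    siteOp N X j = onSite ((j - 1 : ℕ) : Fin N) X := by
  ext f g
  simp [siteOp, onSite_apply, Finset.prod_boole]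

def boundaryTerm (h α θ : ℂ) : Matrix (Fin 2) (Fin 2) ℂ :=
  (I * exp (h * θ)) • pauliP + (I * exp (-(h * θ))) • pauliM + cosh (h * α) • pauliZ

theorem boundaryTerm_mul_self (h α θ : ℂ) :
    boundaryTerm h α θ * boundaryTerm h α θ = sinh (h * α) ^ 2 • 1 := by
  have hexp : exp (h * θ) * exp (-(h * θ)) = 1 := by rw [← exp_add, add_neg_cancel, exp_zero]
  ext a b
  fin_cases a <;> fin_cases b <;>
    simp [boundaryTerm, pauliP, pauliM, pauliZ, mul_apply, Fin.sum_univ_two]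
  · linear_combination cosh_sq_sub_sinh_sq (h * α) + I ^ 2 * hexp + I_sq
  · ring
  · ring
  · linear_combination cosh_sq_sub_sinh_sq (h * α) + I ^ 2 * hexp + I_sq

def blobMatrix (h α θ : ℂ) : Matrix (Fin 2) (Fin 2) ℂ :=
  (1 / (2 * sinh (h * α))) • boundaryTerm h α θ + (1 / 2 : ℂ) • 1

theorem isIdempotentElem_blobMatrix {h α : ℂ} (hα : sinh (h * α) ≠ 0) (θ : ℂ) :
    IsIdempotentElem (blobMatrix h α θ) :=
  isIdempotentElem_smul_add_half hα (boundaryTerm_mul_self h α θ)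

theorem blobL_eq_onSite (N : ℕ) [NeZero N] (h α θ : ℂ) :
    blobL N h α θ = onSite 0 (blobMatrix h α θ) := by
  simp [blobL, blobMatrix, boundaryTerm, siteOp_eq_onSite]

def temperleyLiebMatrix (h : ℂ) : Matrix (Fin 2 × Fin 2) (Fin 2 × Fin 2) ℂ :=
  (-(1 / 2 : ℂ)) •
    (pauliX ⊗ₖ pauliX + pauliY ⊗ₖ pauliY + cosh h • (pauliZ ⊗ₖ pauliZ - 1)
      + sinh h • (1 ⊗ₖ pauliZ - pauliZ ⊗ₖ 1))

theorem eOp_eq_onPair {N : ℕ} [NeZero N] (h : ℂ) {i : ℕ} {p q : Fin N}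
    (hp : ((i - 1 : ℕ) : Fin N) = p) (hq : ((i : ℕ) : Fin N) = q) (hpq : p ≠ q) :
    eOp N h i = onPair hpq (temperleyLiebMatrix h) := by
  simp only [eOp, temperleyLiebMatrix, siteOp_eq_onSite, Nat.add_sub_cancel, hp, hq, map_smul,
    map_add, map_sub, map_one, ← one_kronecker_one, onPair_kronecker, one_mul, mul_one]

-- In the basis `↑↑, ↑↓, ↓↑, ↓↓` the matrix `temperleyLiebMatrix h` is
-- `0 ⊕ [[e^h, -1], [-1, e^{-h}]] ⊕ 0`, the outer product of these two vectors.
def temperleyLiebVec (h : ℂ) : Fin 2 × Fin 2 → ℂ := fun x => !![0, exp h; -1, 0] x.1 x.2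

def temperleyLiebCovec (h : ℂ) : Fin 2 × Fin 2 → ℂ := fun x => !![0, 1; -exp (-h), 0] x.1 x.2

theorem temperleyLiebMatrix_eq_vecMulVec (h : ℂ) :
    temperleyLiebMatrix h = vecMulVec (temperleyLiebVec h) (temperleyLiebCovec h) := by
  have hexp : exp h * exp (-h) = 1 := by rw [← exp_add, add_neg_cancel, exp_zero]
  ext ⟨a, b⟩ ⟨c, d⟩
  fin_cases a <;> fin_cases b <;> fin_cases c <;> fin_cases d <;>
    simp [temperleyLiebMatrix, temperleyLiebVec, temperleyLiebCovec, vecMulVec_apply, pauliX,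
      pauliY, pauliZ, one_apply, hexp, one_add_one_eq_two]
  · linear_combination cosh_add_sinh h
  · linear_combination cosh_sub_sinh h

theorem temperleyLiebCovec_vecMul_blobMatrix_dotProduct {h α : ℂ} (hα : sinh (h * α) ≠ 0)
    (θ : ℂ) :
    (temperleyLiebCovec h ᵥ* (blobMatrix h α θ ⊗ₖ 1)) ⬝ᵥ temperleyLiebVec h
      = sinh (h * (α + 1)) / sinh (h * α) := by
  simp [temperleyLiebCovec, temperleyLiebVec, blobMatrix, boundaryTerm, pauliP, pauliM, pauliZ,
    vecMul, dotProduct, Fintype.sum_prod_type, Fin.sum_univ_two, one_apply]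
  rw [mul_add_one, sinh_add, ← cosh_add_sinh h, ← cosh_sub_sinh h]
  field_simp
  ring

theorem temperleyLiebMatrix_mul_blobMatrix_mul_temperleyLiebMatrix {h α : ℂ}
    (hα : sinh (h * α) ≠ 0) (θ : ℂ) :
    temperleyLiebMatrix h * (blobMatrix h α θ ⊗ₖ 1) * temperleyLiebMatrix h
      = (sinh (h * (α + 1)) / sinh (h * α)) • temperleyLiebMatrix h := by
  rw [temperleyLiebMatrix_eq_vecMulVec, vecMulVec_mul_mul_vecMulVec,
    temperleyLiebCovec_vecMul_blobMatrix_dotProduct hα]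

/-- The left boundary operator `b_l` satisfies the blob-algebra relations with
blob weight `y_l = sinh(h(α_l+1))/sinh(hα_l)`. -/
theorem left_blob_relations (N : ℕ) [NeZero N] (hN : 2 ≤ N) (h αl θl : ℂ)
    (hαl : Complex.sinh (h * αl) ≠ 0) :
    blobL N h αl θl * blobL N h αl θl = blobL N h αl θl ∧
    eOp N h 1 * blobL N h αl θl * eOp N h 1
      = (Complex.sinh (h * (αl + 1)) / Complex.sinh (h * αl)) • eOp N h 1 ∧
    (∀ i : ℕ, 2 ≤ i → i ≤ N - 1 →
      blobL N h αl θl * eOp N h i = eOp N h i * blobL N h αl θl) := by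
  have hsite {a b : ℕ} (ha : a < N) (hb : b < N) (hab : a ≠ b) : (a : Fin N) ≠ b := by
    simpa [Fin.ext_iff, Fin.val_cast_of_lt ha, Fin.val_cast_of_lt hb] using hab
  have hsite_zero {b : ℕ} (hb : b < N) (hb0 : b ≠ 0) : (0 : Fin N) ≠ b := by
    simpa using hsite (a := 0) (by omega) hb hb0.symm
  simp only [blobL_eq_onSite]
  refine ⟨?_, ?_, fun i hi hiN => ?_⟩
  · rw [← map_mul, (isIdempotentElem_blobMatrix hαl θl).eq]
  · have h01 := hsite_zero (b := 1) (by omega) one_ne_zero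
    rw [eOp_eq_onPair h (by simp) rfl h01, onSite_eq_onPair_fst h01, ← map_mul, ← map_mul,
      temperleyLiebMatrix_mul_blobMatrix_mul_temperleyLiebMatrix hαl, map_smul]
  · rw [eOp_eq_onPair h rfl rfl (hsite (by omega) (by omega) (by omega))]
    exact (commute_onSite_onPair (hsite_zero (by omega) (by omega))
      (hsite_zero (by omega) (by omega)) _ _ _).eq
end
end

section
/- Under the reparametrization hδ_l = hα_l/2 − ζ_l, hκ_l = hα_l/2 + ζ_l + iπ/2, hδ_r = hα_r/2 − ζ_r, hκ_r = hα_r/2 + ζ_r − iπ/2 and μ_{l/r} := sinh(h) sinh(hα_{l/r}) / (sinh(ζ_{l/r} − hα_{l/r}/2) sinh(ζ_{l/r} + hα_{l/r}/2)), the non-diagonal open XXZ Hamiltonian H_{n.d.} is, up to an additive multiple of the identity, similar to the two-boundary Temperley–Lieb Hamiltonian: there exist c ∈ ℂ and an invertible linear operator G on (ℂ²)^{⊗N} such that G H_{n.d.} G^{−1} = −μ_l b_l − μ_r b_r − Σ_{i=1}^{N−1} e_i + c·Id. -/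
noncomputable section

/-- The non-diagonal open XXZ Hamiltonian `H_{n.d.}`, parametrized by the combinations
`hδ_l, hκ_l, hθ_l, hδ_r, hκ_r, hθ_r` (each the product of `h` with the corresponding
boundary parameter). -/
def Hnd (N : ℕ) [NeZero N] (h hdl hkl htl hdr hkr htr : ℂ) : Matrix (Conf N) (Conf N) ℂ :=
  (1 / 2 : ℂ) • (∑ i ∈ Finset.Icc 1 (N - 1),
    (siteOp N pauliX i * siteOp N pauliX (i + 1)
      + siteOp N pauliY i * siteOp N pauliY (i + 1)
      + Complex.cosh h • (siteOp N pauliZ i * siteOp N pauliZ (i + 1))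
      + Complex.sinh h • (siteOp N pauliZ (i + 1) - siteOp N pauliZ i)))
  + (Complex.sinh h / (2 * Complex.sinh hdl * Complex.cosh hkl)) •
      (Complex.exp htl • siteOp N pauliP 1 + Complex.exp (-htl) • siteOp N pauliM 1
        + Complex.sinh (hdl + hkl) • siteOp N pauliZ 1)
  + (Complex.sinh h / (2 * Complex.sinh hdr * Complex.cosh hkr)) •
      (Complex.exp htr • siteOp N pauliP N + Complex.exp (-htr) • siteOp N pauliM N
        - Complex.sinh (hdr + hkr) • siteOp N pauliZ N)

/-!
Conjugation by the parity operator `∏ⱼ σᶻⱼ` negates `σˣ, σʸ, σ⁺, σ⁻` and fixes `σᶻ`, so it fixes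
the bulk of `H_{n.d.}` and shifts both boundary phases `hθ` by `iπ`. After this shift the
half-period identities `cosh (x + iπ/2) = i sinh x`, `sinh (x + iπ/2) = i cosh x` turn each
boundary term into `-μ b + μ/2`, while each bulk term is `-eᵢ + cosh h / 2`.
-/

open Complex
open scoped Real

namespace Complex

lemma cosh_add_pi_mul_I_div_two (z : ℂ) : cosh (z + π * I / 2) = I * sinh z := by
  rw [mul_div_right_comm, cosh_add, cosh_mul_I, sinh_mul_I, ← ofReal_ofNat, ← ofReal_div,
    ← ofReal_cos, ← ofReal_sin, Real.cos_pi_div_two, Real.sin_pi_div_two]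
  push_cast; ring

lemma sinh_add_pi_mul_I_div_two (z : ℂ) : sinh (z + π * I / 2) = I * cosh z := by
  rw [mul_div_right_comm, sinh_add, cosh_mul_I, sinh_mul_I, ← ofReal_ofNat, ← ofReal_div,
    ← ofReal_cos, ← ofReal_sin, Real.cos_pi_div_two, Real.sin_pi_div_two]
  push_cast; ring

lemma cosh_sub_pi_mul_I_div_two (z : ℂ) : cosh (z - π * I / 2) = -(I * sinh z) := by
  rw [show z - π * I / 2 = z - π * I + π * I / 2 by ring, cosh_add_pi_mul_I_div_two,
    sinh_sub_pi_mul_I, mul_neg]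

lemma sinh_sub_pi_mul_I_div_two (z : ℂ) : sinh (z - π * I / 2) = -(I * cosh z) := by
  rw [show z - π * I / 2 = z - π * I + π * I / 2 by ring, sinh_add_pi_mul_I_div_two,
    cosh_sub_pi_mul_I, mul_neg]

end Complex

lemma neg_one_pow_fin_two_mul_self (a : Fin 2) : (-1 : ℂ) ^ (a : ℕ) * (-1) ^ (a : ℕ) = 1 := by
  rw [← pow_add, Even.neg_one_pow ⟨_, rfl⟩]

lemma pauliZ_eq_diagonal : pauliZ = Matrix.diagonal fun a : Fin 2 => (-1 : ℂ) ^ (a : ℕ) := by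
  ext a b; fin_cases a <;> fin_cases b <;> simp [pauliZ]

lemma pauliZ_mul_mul_pauliZ_apply (X : Matrix (Fin 2) (Fin 2) ℂ) (a b : Fin 2) :
    (pauliZ * X * pauliZ) a b = (-1) ^ (a : ℕ) * X a b * (-1) ^ (b : ℕ) := by
  rw [pauliZ_eq_diagonal, Matrix.mul_diagonal, Matrix.diagonal_mul]

lemma pauliZ_mul_pauliX_mul_pauliZ : pauliZ * pauliX * pauliZ = -pauliX := by
  ext a b; fin_cases a <;> fin_cases b <;> simp [pauliZ, pauliX]

lemma pauliZ_mul_pauliY_mul_pauliZ : pauliZ * pauliY * pauliZ = -pauliY := by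
  ext a b; fin_cases a <;> fin_cases b <;> simp [pauliZ, pauliY]

lemma pauliZ_mul_pauliZ_mul_pauliZ : pauliZ * pauliZ * pauliZ = pauliZ := by
  ext a b; fin_cases a <;> fin_cases b <;> simp [pauliZ]

lemma pauliZ_mul_pauliP_mul_pauliZ : pauliZ * pauliP * pauliZ = -pauliP := by
  ext a b; fin_cases a <;> fin_cases b <;> simp [pauliZ, pauliP]

lemma pauliZ_mul_pauliM_mul_pauliZ : pauliZ * pauliM * pauliZ = -pauliM := by
  ext a b; fin_cases a <;> fin_cases b <;> simp [pauliZ, pauliM]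

section Parity

variable (N : ℕ)

def parityOp : Matrix (Conf N) (Conf N) ℂ :=
  Matrix.diagonal fun f => ∏ j, (-1 : ℂ) ^ (f j : ℕ)

lemma parityOp_mul_self : parityOp N * parityOp N = 1 := by
  rw [parityOp, Matrix.diagonal_mul_diagonal, ← Matrix.diagonal_one]
  congr 1
  ext f
  rw [← Finset.prod_mul_distrib]
  exact Finset.prod_eq_one fun j _ => neg_one_pow_fin_two_mul_self (f j)

def parityUnit : (Matrix (Conf N) (Conf N) ℂ)ˣ :=
  ⟨parityOp N, parityOp N, parityOp_mul_self N, parityOp_mul_self N⟩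

def parityConj : Matrix (Conf N) (Conf N) ℂ ≃ₐ[ℂ] Matrix (Conf N) (Conf N) ℂ :=
  MulSemiringAction.toAlgEquiv ℂ _ (ConjAct.toConjAct (parityUnit N))

lemma parityConj_apply (A : Matrix (Conf N) (Conf N) ℂ) :
    parityConj N A = parityOp N * A * parityOp N := rfl

variable [NeZero N]

lemma siteOp_neg (X : Matrix (Fin 2) (Fin 2) ℂ) (j : ℕ) : siteOp N (-X) j = -siteOp N X j := by
  ext f g; simp [siteOp, neg_mul]

open Fin.NatCast in
lemma parityConj_siteOp (X : Matrix (Fin 2) (Fin 2) ℂ) (j : ℕ) :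
    parityConj N (siteOp N X j) = siteOp N (pauliZ * X * pauliZ) j := by
  ext f g
  simp only [parityConj_apply, parityOp, Matrix.mul_diagonal, Matrix.diagonal_mul, siteOp,
    Matrix.of_apply, pauliZ_mul_mul_pauliZ_apply]
  generalize ((j - 1 : ℕ) : Fin N) = s
  rw [← Finset.mul_prod_erase _ _ (Finset.mem_univ s),
    ← Finset.mul_prod_erase _ (fun k => (-1 : ℂ) ^ (g k : ℕ)) (Finset.mem_univ s)]
  -- off site `s` the two sign factors cancel wherever the Kronecker deltas are nonzero
  have off_site : (∏ k ∈ Finset.univ.erase s, (-1 : ℂ) ^ (f k : ℕ)) *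
      (∏ k ∈ Finset.univ.erase s, if f k = g k then (1 : ℂ) else 0) *
      ∏ k ∈ Finset.univ.erase s, (-1 : ℂ) ^ (g k : ℕ)
      = ∏ k ∈ Finset.univ.erase s, if f k = g k then (1 : ℂ) else 0 := by
    rw [← Finset.prod_mul_distrib, ← Finset.prod_mul_distrib]
    refine Finset.prod_congr rfl fun k _ => ?_
    split_ifs with hk
    · rw [mul_one, hk, neg_one_pow_fin_two_mul_self]
    · simp
  linear_combination (-1 : ℂ) ^ (f s : ℕ) * X (f s) (g s) * (-1) ^ (g s : ℕ) * off_site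

lemma parityConj_Hnd (h hdl hkl htl hdr hkr htr : ℂ) :
    parityConj N (Hnd N h hdl hkl htl hdr hkr htr)
      = Hnd N h hdl hkl (htl + π * I) hdr hkr (htr + π * I) := by
  simp only [Hnd, map_add, map_sub, map_smul, map_sum, map_mul, parityConj_siteOp,
    pauliZ_mul_pauliX_mul_pauliZ, pauliZ_mul_pauliY_mul_pauliZ, pauliZ_mul_pauliZ_mul_pauliZ,
    pauliZ_mul_pauliP_mul_pauliZ, pauliZ_mul_pauliM_mul_pauliZ, siteOp_neg, neg_mul_neg,
    exp_add_pi_mul_I, neg_add, exp_sub_pi_mul_I, ← sub_eq_add_neg, smul_neg, neg_smul]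

end Parity

section Boundary

variable (h α ζ : ℂ)

lemma left_boundary_coeff (hα : sinh (h * α) ≠ 0) :
    sinh h / (2 * sinh (h * α / 2 - ζ) * cosh (h * α / 2 + ζ + π * I / 2))
      = I * (sinh h * sinh (h * α) / (sinh (ζ - h * α / 2) * sinh (ζ + h * α / 2)))
        / (2 * sinh (h * α)) := by
  rw [← neg_sub, sinh_neg, add_comm (h * α / 2) ζ, cosh_add_pi_mul_I_div_two]
  field_simp
  rw [I_sq]
  ring

lemma right_boundary_coeff (hα : sinh (h * α) ≠ 0) :
    sinh h / (2 * sinh (h * α / 2 - ζ) * cosh (h * α / 2 + ζ - π * I / 2))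
      = -I * (sinh h * sinh (h * α) / (sinh (ζ - h * α / 2) * sinh (ζ + h * α / 2)))
        / (2 * sinh (h * α)) := by
  rw [← neg_sub, sinh_neg, add_comm (h * α / 2) ζ, cosh_sub_pi_mul_I_div_two]
  field_simp
  rw [I_sq]
  ring

variable (N : ℕ) [NeZero N] (θ : ℂ)

lemma left_boundary_eq_neg_smul_blobL_add (hα : sinh (h * α) ≠ 0) :
    (sinh h / (2 * sinh (h * α / 2 - ζ) * cosh (h * α / 2 + ζ + π * I / 2))) •
      (exp (h * θ + π * I) • siteOp N pauliP 1 + exp (-(h * θ + π * I)) • siteOp N pauliM 1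
        + sinh ((h * α / 2 - ζ) + (h * α / 2 + ζ + π * I / 2)) • siteOp N pauliZ 1)
    = (-(sinh h * sinh (h * α) / (sinh (ζ - h * α / 2) * sinh (ζ + h * α / 2)))) •
        blobL N h α θ
      + (sinh h * sinh (h * α) / (sinh (ζ - h * α / 2) * sinh (ζ + h * α / 2)) / 2) • 1 := by
  rw [left_boundary_coeff h α ζ hα, show h * α / 2 - ζ + (h * α / 2 + ζ + π * I / 2)
      = h * α + π * I / 2 by ring, sinh_add_pi_mul_I_div_two, exp_add_pi_mul_I, neg_add,
    ← sub_eq_add_neg, exp_sub_pi_mul_I, blobL]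
  set μ := sinh h * sinh (h * α) / (sinh (ζ - h * α / 2) * sinh (ζ + h * α / 2))
  match_scalars
  · ring
  · ring
  · linear_combination μ * cosh (h * α) / (2 * sinh (h * α)) * I_sq
  · ring

lemma right_boundary_eq_neg_smul_blobR_add (hα : sinh (h * α) ≠ 0) :
    (sinh h / (2 * sinh (h * α / 2 - ζ) * cosh (h * α / 2 + ζ - π * I / 2))) •
      (exp (h * θ + π * I) • siteOp N pauliP N + exp (-(h * θ + π * I)) • siteOp N pauliM N
        - sinh ((h * α / 2 - ζ) + (h * α / 2 + ζ - π * I / 2)) • siteOp N pauliZ N)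
    = (-(sinh h * sinh (h * α) / (sinh (ζ - h * α / 2) * sinh (ζ + h * α / 2)))) •
        blobR N h α θ
      + (sinh h * sinh (h * α) / (sinh (ζ - h * α / 2) * sinh (ζ + h * α / 2)) / 2) • 1 := by
  rw [right_boundary_coeff h α ζ hα, show h * α / 2 - ζ + (h * α / 2 + ζ - π * I / 2)
      = h * α - π * I / 2 by ring, sinh_sub_pi_mul_I_div_two, exp_add_pi_mul_I, neg_add,
    ← sub_eq_add_neg, exp_sub_pi_mul_I, blobR]
  set μ := sinh h * sinh (h * α) / (sinh (ζ - h * α / 2) * sinh (ζ + h * α / 2))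
  match_scalars
  · ring
  · ring
  · linear_combination -μ * cosh (h * α) / (2 * sinh (h * α)) * I_sq
  · ring

end Boundary

section Bulk

variable (N : ℕ) [NeZero N] (h : ℂ)

lemma half_bond_eq_neg_eOp_add (i : ℕ) :
    (1 / 2 : ℂ) • (siteOp N pauliX i * siteOp N pauliX (i + 1)
        + siteOp N pauliY i * siteOp N pauliY (i + 1)
        + cosh h • (siteOp N pauliZ i * siteOp N pauliZ (i + 1))
        + sinh h • (siteOp N pauliZ (i + 1) - siteOp N pauliZ i))
      = -eOp N h i + (cosh h / 2) • 1 := by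
  rw [eOp]
  module

lemma half_sum_bonds_eq_neg_sum_eOp_add :
    (1 / 2 : ℂ) • (∑ i ∈ Finset.Icc 1 (N - 1),
      (siteOp N pauliX i * siteOp N pauliX (i + 1)
        + siteOp N pauliY i * siteOp N pauliY (i + 1)
        + cosh h • (siteOp N pauliZ i * siteOp N pauliZ (i + 1))
        + sinh h • (siteOp N pauliZ (i + 1) - siteOp N pauliZ i)))
    = -(∑ i ∈ Finset.Icc 1 (N - 1), eOp N h i) + (((N - 1 : ℕ) : ℂ) * cosh h / 2) • 1 := by
  rw [Finset.smul_sum, Finset.sum_congr rfl fun i _ => half_bond_eq_neg_eOp_add N h i,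
    Finset.sum_add_distrib, Finset.sum_neg_distrib, Finset.sum_const, Nat.card_Icc,
    ← Nat.cast_smul_eq_nsmul ℂ, smul_smul, add_tsub_cancel_right]
  module

end Bulk

theorem Hnd_similar_to_two_boundary_TL_hamiltonian_general (N : ℕ) [NeZero N]
    (h αl αr ζl ζr θl θr : ℂ)
    (hαl : Complex.sinh (h * αl) ≠ 0) (hαr : Complex.sinh (h * αr) ≠ 0) :
    ∃ (c : ℂ) (G : Matrix (Conf N) (Conf N) ℂ), IsUnit G ∧
      G * Hnd N h (h * αl / 2 - ζl) (h * αl / 2 + ζl + (Real.pi : ℂ) * Complex.I / 2)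
            (h * θl) (h * αr / 2 - ζr) (h * αr / 2 + ζr - (Real.pi : ℂ) * Complex.I / 2)
            (h * θr) * G⁻¹
        = (-(Complex.sinh h * Complex.sinh (h * αl) /
              (Complex.sinh (ζl - h * αl / 2) * Complex.sinh (ζl + h * αl / 2)))) •
              blobL N h αl θl
          + (-(Complex.sinh h * Complex.sinh (h * αr) /
              (Complex.sinh (ζr - h * αr / 2) * Complex.sinh (ζr + h * αr / 2)))) •
              blobR N h αr θr
          - (∑ i ∈ Finset.Icc 1 (N - 1), eOp N h i)
          + c • 1 := by
  refine ⟨((N - 1 : ℕ) : ℂ) * cosh h / 2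
      + sinh h * sinh (h * αl) / (sinh (ζl - h * αl / 2) * sinh (ζl + h * αl / 2)) / 2
      + sinh h * sinh (h * αr) / (sinh (ζr - h * αr / 2) * sinh (ζr + h * αr / 2)) / 2,
    parityOp N, (parityUnit N).isUnit, ?_⟩
  rw [Matrix.inv_eq_right_inv (parityOp_mul_self N), ← parityConj_apply, parityConj_Hnd, Hnd,
    half_sum_bonds_eq_neg_sum_eOp_add, left_boundary_eq_neg_smul_blobL_add h αl ζl N θl hαl,
    right_boundary_eq_neg_smul_blobR_add h αr ζr N θr hαr]
  module

/-- Under the reparametrization `hδ_l = hα_l/2 − ζ_l`,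
`hκ_l = hα_l/2 + ζ_l + iπ/2`, `hδ_r = hα_r/2 − ζ_r`, `hκ_r = hα_r/2 + ζ_r − iπ/2` and
`μ_{l/r} = sinh(h) sinh(hα_{l/r}) / (sinh(ζ_{l/r} − hα_{l/r}/2) sinh(ζ_{l/r} + hα_{l/r}/2))`,
the Hamiltonian `H_{n.d.}` is, up to an additive multiple of the identity, similar to the
two-boundary Temperley–Lieb Hamiltonian `−μ_l b_l − μ_r b_r − Σ e_i`. -/
theorem Hnd_similar_to_two_boundary_TL_hamiltonian (N : ℕ) [NeZero N] (hN : 2 ≤ N)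
    (h αl αr ζl ζr θl θr : ℂ)
    (hαl : Complex.sinh (h * αl) ≠ 0) (hαr : Complex.sinh (h * αr) ≠ 0)
    (hζl₁ : Complex.sinh (ζl - h * αl / 2) ≠ 0) (hζl₂ : Complex.sinh (ζl + h * αl / 2) ≠ 0)
    (hζr₁ : Complex.sinh (ζr - h * αr / 2) ≠ 0) (hζr₂ : Complex.sinh (ζr + h * αr / 2) ≠ 0) :
    ∃ (c : ℂ) (G : Matrix (Conf N) (Conf N) ℂ), IsUnit G ∧
      G * Hnd N h (h * αl / 2 - ζl) (h * αl / 2 + ζl + (Real.pi : ℂ) * Complex.I / 2)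
            (h * θl) (h * αr / 2 - ζr) (h * αr / 2 + ζr - (Real.pi : ℂ) * Complex.I / 2)
            (h * θr) * G⁻¹
        = (-(Complex.sinh h * Complex.sinh (h * αl) /
              (Complex.sinh (ζl - h * αl / 2) * Complex.sinh (ζl + h * αl / 2)))) •
              blobL N h αl θl
          + (-(Complex.sinh h * Complex.sinh (h * αr) /
              (Complex.sinh (ζr - h * αr / 2) * Complex.sinh (ζr + h * αr / 2)))) •
              blobR N h αr θr
          - (∑ i ∈ Finset.Icc 1 (N - 1), eOp N h i)
          + c • 1 :=
  Hnd_similar_to_two_boundary_TL_hamiltonian_general N h αl αr ζl ζr θl θr hαl hαr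
end
end

section
/- The one-magnon Bethe equation is equivalent to a Chebyshev polynomial equation: (λ − δ + μ((δ−y)x − 1)) / (λ − δ + μ((δ−y)x^{−1} − 1)) = x^{2N} holds if and only if U_N(λ/2) − (μ+δ) U_{N−1}(λ/2) + (1 + μ(δ−y)) U_{N−2}(λ/2) = 0, where U_n denotes the n-th Chebyshev polynomial of the second kind. -/
lemma cheb_eval_aux (x : ℂ) (hx : x ≠ 0) (n : ℕ) :
    (x - x⁻¹) * (Polynomial.Chebyshev.U ℂ (n : ℤ)).eval ((x + x⁻¹) / 2)
      = x ^ (n + 1) - x⁻¹ ^ (n + 1) := by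
  have h1 : x * x⁻¹ = 1 := mul_inv_cancel₀ hx
  induction n using Nat.twoStepInduction with
  | zero => simp [Polynomial.Chebyshev.U_zero]
  | one =>
      simp only [Nat.cast_one, Polynomial.Chebyshev.U_one, Polynomial.eval_mul,
        Polynomial.eval_ofNat, Polynomial.eval_X]
      ring
  | more n ih0 ih1 =>
      have : ((n + 2 : ℕ) : ℤ) = (n : ℤ) + 2 := by push_cast; ring
      rw [this, Polynomial.Chebyshev.U_add_two]
      simp only [Polynomial.eval_sub, Polynomial.eval_mul, Polynomial.eval_ofNat,
        Polynomial.eval_X]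
      have h2 : ((n + 1 : ℕ) : ℤ) = (n : ℤ) + 1 := by push_cast; ring
      rw [h2] at ih1
      linear_combination (x + x⁻¹) * ih1 - ih0 + (x ^ (n + 1) - x⁻¹ ^ (n + 1)) * h1

/-- The one-magnon Bethe equation is equivalent to a Chebyshev polynomial
equation, with `U_n` the Chebyshev polynomials of the second kind and `λ = x + x⁻¹`. -/
theorem one_magnon_BAE_iff_chebyshev (N : ℕ) (hN : 2 ≤ N) (δ y μ : ℂ) (x : ℂ)
    (hx : x ≠ 0) (hx2 : x ^ 2 ≠ 1)
    (hden : (x + x⁻¹) - δ + μ * ((δ - y) * x⁻¹ - 1) ≠ 0) :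
    ((x + x⁻¹) - δ + μ * ((δ - y) * x - 1)) / ((x + x⁻¹) - δ + μ * ((δ - y) * x⁻¹ - 1))
        = x ^ (2 * N)
      ↔ (Polynomial.Chebyshev.U ℂ (N : ℤ)).eval ((x + x⁻¹) / 2)
          - (μ + δ) * (Polynomial.Chebyshev.U ℂ ((N : ℤ) - 1)).eval ((x + x⁻¹) / 2)
          + (1 + μ * (δ - y)) * (Polynomial.Chebyshev.U ℂ ((N : ℤ) - 2)).eval ((x + x⁻¹) / 2)
        = 0 := by
  obtain ⟨M, rfl⟩ := Nat.exists_eq_add_of_le hN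
  have h1 : x * x⁻¹ = 1 := mul_inv_cancel₀ hx
  have hM : x ^ M * x⁻¹ ^ M = 1 := by rw [← mul_pow, h1, one_pow]
  have hxx : x - x⁻¹ ≠ 0 := by
    intro h
    apply hx2
    have hxe : x = x⁻¹ := sub_eq_zero.mp h
    calc x ^ 2 = x * x := sq x
    _ = x * x⁻¹ := by rw [← hxe]
    _ = 1 := h1
  have e0 : ((2 + M : ℕ) : ℤ) - 2 = ((M : ℕ) : ℤ) := by push_cast; ring
  have e1 : ((2 + M : ℕ) : ℤ) - 1 = ((M + 1 : ℕ) : ℤ) := by push_cast; ring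
  have e2 : ((2 + M : ℕ) : ℤ) = ((M + 2 : ℕ) : ℤ) := by push_cast; ring
  rw [e0, e1, e2]
  have c0 := cheb_eval_aux x hx M
  have c1 := cheb_eval_aux x hx (M + 1)
  have c2 := cheb_eval_aux x hx (M + 2)
  have key : ((x + x⁻¹) - δ + μ * ((δ - y) * x - 1))
      - x ^ (2 * (2 + M)) * ((x + x⁻¹) - δ + μ * ((δ - y) * x⁻¹ - 1))
      = -(x ^ (2 + M)) * ((x - x⁻¹) *
        ((Polynomial.Chebyshev.U ℂ ((M + 2 : ℕ) : ℤ)).eval ((x + x⁻¹) / 2)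
          - (μ + δ) * (Polynomial.Chebyshev.U ℂ ((M + 1 : ℕ) : ℤ)).eval ((x + x⁻¹) / 2)
          + (1 + μ * (δ - y)) * (Polynomial.Chebyshev.U ℂ ((M : ℕ) : ℤ)).eval ((x + x⁻¹) / 2))) := by
    linear_combination (x ^ (M + 2)) * c2 + (-(x ^ (M + 2)) * (μ + δ)) * c1
      + (x ^ (M + 2) * (1 + μ * (δ - y))) * c0
      + (x ^ M * x⁻¹ ^ M * μ + x ^ M * x⁻¹ ^ M * δ - x⁻¹ * (x ^ M * x⁻¹ ^ M)
          - x * (x ^ M * x⁻¹ ^ M) + x * (x ^ M * x⁻¹ ^ M) * μ * y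
          - x * (x ^ M * x⁻¹ ^ M) * δ * μ + x * x⁻¹ * (x ^ M * x⁻¹ ^ M) * μ
          + x * x⁻¹ * (x ^ M * x⁻¹ ^ M) * δ - x * x⁻¹ ^ 2 * (x ^ M * x⁻¹ ^ M)
          - x ^ 3 * x ^ (2 * M) + x ^ 3 * x ^ (2 * M) * μ * y
          - x ^ 3 * x ^ (2 * M) * δ * μ) * h1
      + (μ + δ - x⁻¹ - x + x * μ * y - x * δ * μ) * hM
  rw [div_eq_iff hden, ← sub_eq_zero, key, neg_mul, neg_eq_zero, mul_eq_zero, mul_eq_zero]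
  simp [hx, hxx]
end

section
/- The boundary dressing function factorizes: with μ := sinh(h) sinh(hα) / (sinh(ζ − hα/2) sinh(ζ + hα/2)), one has, for every u ∈ ℂ, 1 − μ · sinh(u − h/2) sinh(u + h(α − 1/2)) / (sinh(h) sinh(hα)) = sinh(u + h(α−1)/2 − ζ) sinh(u + h(α−1)/2 + ζ) / (sinh(hα/2 − ζ) sinh(hα/2 + ζ)). -/
/-!
Put `v = u + h(α - 1)/2`, so that the arguments on both sides come in pairs `v ± hα/2`, `ζ ± hα/2`,
`v ± ζ`, `hα/2 ± ζ`. By `sinh (x - y) sinh (x + y) = sinh² x - sinh² y` every product of a pair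
becomes a difference of two of `V = sinh² v`, `Z = sinh² ζ`, `A = sinh² (hα/2)`, and the identity
becomes `1 - (V - A) / (Z - A) = (V - Z) / (A - Z)`.
-/

theorem Complex.sinh_sub_mul_sinh_add (x y : ℂ) :
    Complex.sinh (x - y) * Complex.sinh (x + y) = Complex.sinh x ^ 2 - Complex.sinh y ^ 2 := by
  rw [Complex.sinh_sub, Complex.sinh_add]
  linear_combination Complex.sinh x ^ 2 * Complex.cosh_sq_sub_sinh_sq y
    - Complex.sinh y ^ 2 * Complex.cosh_sq_sub_sinh_sq x

/-- The boundary dressing function factorizes. -/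
theorem boundary_dressing_factorizes (h α ζ : ℂ)
    (hh : Complex.sinh h ≠ 0) (hα : Complex.sinh (h * α) ≠ 0)
    (hζm : Complex.sinh (ζ - h * α / 2) ≠ 0) (hζp : Complex.sinh (ζ + h * α / 2) ≠ 0) :
    ∀ u : ℂ,
      1 - (Complex.sinh h * Complex.sinh (h * α) /
            (Complex.sinh (ζ - h * α / 2) * Complex.sinh (ζ + h * α / 2))) *
          (Complex.sinh (u - h / 2) * Complex.sinh (u + h * (α - 1 / 2)) /
            (Complex.sinh h * Complex.sinh (h * α)))
        = Complex.sinh (u + h * (α - 1) / 2 - ζ) * Complex.sinh (u + h * (α - 1) / 2 + ζ) /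
            (Complex.sinh (h * α / 2 - ζ) * Complex.sinh (h * α / 2 + ζ)) := by
  intro u
  have hζ : Complex.sinh ζ ^ 2 - Complex.sinh (h * α / 2) ^ 2 ≠ 0 := by
    rw [← Complex.sinh_sub_mul_sinh_add]
    exact mul_ne_zero hζm hζp
  have hu : Complex.sinh (u - h / 2) * Complex.sinh (u + h * (α - 1 / 2)) =
      Complex.sinh (u + h * (α - 1) / 2) ^ 2 - Complex.sinh (h * α / 2) ^ 2 := by
    rw [← Complex.sinh_sub_mul_sinh_add]
    ring_nf
  have hα' : Complex.sinh (h * α / 2) ^ 2 - Complex.sinh ζ ^ 2 ≠ 0 := by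
    rwa [← neg_sub, neg_ne_zero]
  rw [hu, Complex.sinh_sub_mul_sinh_add, Complex.sinh_sub_mul_sinh_add,
    Complex.sinh_sub_mul_sinh_add]
  field_simp
  ring
end
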